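/- arXiv:2007.15478 — 2 statements merged into one kernel-verified Lean document; each statement's English description precedes it below -/
import Mathlib

section
/- For every quadratic word equation E, the set {E' : E ⇒* E'} of word equations reachable from E under the Nielsen transformation is finite. -/
/-!
For a quadratic equation, no Nielsen step increases the number of occurrences of any symbol,
so every reachable equation is a sub-multiset of the original one and in particular no longer.
Erasing and cancelling only delete symbols. A substitution `y ↦ α y` triggered by the head `y`
inserts one `α` for each remaining occurrence of `y`, of which there is at most one since `y`
occurs at most twice; that inserted `α` replaces the head `α` just consumed. Over a finite
alphabet there are only finitely many equations of bounded length.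
-/

namespace WordEq

variable {A V : Type*}

/-- A word over the alphabet of constants `A` and variables `V`. -/
abbrev Word (A V : Type*) := List (A ⊕ V)

/-- A word equation `L = R`, given as the pair `(L, R)`. -/
abbrev Equation (A V : Type*) := Word A V × Word A V

/-- Substitute the word `r` for every occurrence of the variable `x` in `w`. -/
def substVar [DecidableEq V] (x : V) (r : Word A V) (w : Word A V) : Word A V :=
  w.flatMap fun s =>
    match s with
    | Sum.inl a => [Sum.inl a]
    | Sum.inr y => if y = x then r else [Sum.inr y]

/-- The number of occurrences of the variable `x` in the equation `E`
(counting both sides). -/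
def varCount [DecidableEq A] [DecidableEq V] (E : Equation A V) (x : V) : ℕ :=
  (E.1 ++ E.2).count (Sum.inr x)

/-- An equation is quadratic if every variable occurs at most twice. -/
def Quadratic [DecidableEq A] [DecidableEq V] (E : Equation A V) : Prop :=
  ∀ x : V, varCount E x ≤ 2

/-- Apply a substitution (a map from variables to constant words) to a word,
i.e. the unique monoid homomorphism `(A ∪ V)* → A*` extending `σ` and fixing
every constant. -/
def applySub (σ : V → List A) (w : Word A V) : List A :=
  w.flatMap fun s =>
    match s with
    | Sum.inl a => [a]
    | Sum.inr x => σ x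

/-- `σ` is a solution of the word equation `E`. -/
def IsSolution (σ : V → List A) (E : Equation A V) : Prop :=
  applySub σ E.1 = applySub σ E.2

/-- The length `|E| = |L| + |R|` of a word equation. -/
def eqLen (E : Equation A V) : ℕ := E.1.length + E.2.length

/-- The Nielsen transformation (Levi's method) rewriting relation on word
equations.  The rules `p1`–`p4` remove a nonempty prefix from an equation
`α·w₁ = β·w₂`; the rules `eraseL`/`eraseR` erase a variable that is guessed to
denote the empty word (substituting `ε` for it everywhere). -/
inductive Nielsen [DecidableEq V] : Equation A V → Equation A V → Prop
  | eraseL (x : V) (w₁ w₂ : Word A V) :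
      Nielsen (Sum.inr x :: w₁, w₂) (substVar x [] w₁, substVar x [] w₂)
  | eraseR (w₁ : Word A V) (x : V) (w₂ : Word A V) :
      Nielsen (w₁, Sum.inr x :: w₂) (substVar x [] w₁, substVar x [] w₂)
  | p1 (α : A ⊕ V) (w₁ w₂ : Word A V) :
      Nielsen (α :: w₁, α :: w₂) (w₁, w₂)
  | p2 (a : A) (y : V) (w₁ w₂ : Word A V) :
      Nielsen (Sum.inl a :: w₁, Sum.inr y :: w₂)
        (substVar y [Sum.inl a, Sum.inr y] w₁,
          Sum.inr y :: substVar y [Sum.inl a, Sum.inr y] w₂)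
  | p3 (x : V) (a : A) (w₁ w₂ : Word A V) :
      Nielsen (Sum.inr x :: w₁, Sum.inl a :: w₂)
        (Sum.inr x :: substVar x [Sum.inl a, Sum.inr x] w₁,
          substVar x [Sum.inl a, Sum.inr x] w₂)
  | p4L (x y : V) (hxy : x ≠ y) (w₁ w₂ : Word A V) :
      Nielsen (Sum.inr x :: w₁, Sum.inr y :: w₂)
        (substVar y [Sum.inr x, Sum.inr y] w₁,
          Sum.inr y :: substVar y [Sum.inr x, Sum.inr y] w₂)
  | p4R (x y : V) (hxy : x ≠ y) (w₁ w₂ : Word A V) :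
      Nielsen (Sum.inr x :: w₁, Sum.inr y :: w₂)
        (Sum.inr x :: substVar x [Sum.inr y, Sum.inr x] w₁,
          substVar x [Sum.inr y, Sum.inr x] w₂)

-- `List.count` on `A ⊕ V` uses the derived `Sum.instBEq`, which core does not declare lawful.
instance instLawfulBEqSum {α β : Type*} [BEq α] [LawfulBEq α] [BEq β] [LawfulBEq β] :
    LawfulBEq (α ⊕ β) where
  eq_of_beq {a b} h := by
    rcases a with a | a <;> rcases b with b | b
    · exact congrArg Sum.inl (eq_of_beq (a := a) (b := b) h)
    · exact absurd h Bool.false_ne_true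
    · exact absurd h Bool.false_ne_true
    · exact congrArg Sum.inr (eq_of_beq (a := a) (b := b) h)
  rfl {a} := by
    rcases a with a | a
    · exact beq_self_eq_true a
    · exact beq_self_eq_true a

section

variable [DecidableEq V]

theorem substVar_append (x : V) (r u w : Word A V) :
    substVar x r (u ++ w) = substVar x r u ++ substVar x r w :=
  List.flatMap_append

theorem substVar_singleton [DecidableEq A] (x : V) (r : Word A V) (t : A ⊕ V) :
    substVar x r [t] = if t = .inr x then r else [t] := by
  rcases t with a | y <;> simp [substVar]

theorem count_substVar [DecidableEq A] (s : A ⊕ V) (x : V) (r w : Word A V) :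
    (substVar x r w).count s =
      (if s = .inr x then 0 else w.count s) + r.count s * w.count (.inr x) := by
  induction w with
  | nil => simp [substVar]
  | cons t w ih =>
    rw [show t :: w = [t] ++ w from rfl, substVar_append, List.count_append, ih,
      substVar_singleton, List.count_append]
    grind [List.count_singleton]

theorem count_substVar_nil_le [DecidableEq A] (s : A ⊕ V) (x : V) (w : Word A V) :
    (substVar x [] w).count s ≤ w.count s := by
  rw [count_substVar]
  split_ifs <;> simp

theorem count_substVar_cons_self [DecidableEq A] (s t : A ⊕ V) (y : V) (w : Word A V) :
    (substVar y [t, .inr y] w).count s = w.count s + if t = s then w.count (.inr y) else 0 := by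
  rw [count_substVar]
  grind

end

theorem Nielsen.subperm [DecidableEq A] [DecidableEq V] {E E' : Equation A V} (h : Nielsen E E')
    (hq : Quadratic E) : (E'.1 ++ E'.2).Subperm (E.1 ++ E.2) := by
  refine List.subperm_ext_iff.2 fun s _ => ?_
  cases h with
  | eraseL x w₁ w₂ =>
    simp only [List.count_append, List.count_cons]
    have := count_substVar_nil_le s x w₁
    have := count_substVar_nil_le s x w₂
    omega
  | eraseR w₁ x w₂ =>
    simp only [List.count_append, List.count_cons]
    have := count_substVar_nil_le s x w₁
    have := count_substVar_nil_le s x w₂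
    omega
  | p1 α w₁ w₂ => simp only [List.count_append, List.count_cons]; omega
  | p2 a y w₁ w₂ =>
    have hy := hq y
    simp only [varCount] at hy
    simp only [List.count_append, List.count_cons, count_substVar_cons_self]
    grind
  | p3 x a w₁ w₂ =>
    have hx := hq x
    simp only [varCount] at hx
    simp only [List.count_append, List.count_cons, count_substVar_cons_self]
    grind
  | p4L x y _ w₁ w₂ =>
    have hy := hq y
    simp only [varCount] at hy
    simp only [List.count_append, List.count_cons, count_substVar_cons_self]
    grind
  | p4R x y _ w₁ w₂ =>
    have hx := hq x
    simp only [varCount] at hx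
    simp only [List.count_append, List.count_cons, count_substVar_cons_self]
    grind

theorem Quadratic.of_subperm [DecidableEq A] [DecidableEq V] {E E' : Equation A V}
    (h : (E'.1 ++ E'.2).Subperm (E.1 ++ E.2)) (hq : Quadratic E) : Quadratic E' :=
  fun x => (h.count_le _).trans (hq x)

theorem Nielsen.reflTransGen_subperm [DecidableEq A] [DecidableEq V] {E E' : Equation A V}
    (h : Relation.ReflTransGen Nielsen E E') (hq : Quadratic E) :
    (E'.1 ++ E'.2).Subperm (E.1 ++ E.2) := by
  induction h with
  | refl => exact List.Subperm.refl _
  | tail _ hstep ih => exact (hstep.subperm (hq.of_subperm ih)).trans ih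

theorem finite_setOf_eqLen_le [Finite A] [Finite V] (n : ℕ) :
    {E : Equation A V | eqLen E ≤ n}.Finite :=
  ((List.finite_length_le _ n).prod (List.finite_length_le _ n)).subset fun _ hE =>
    ⟨(Nat.le_add_right _ _).trans hE, (Nat.le_add_left _ _).trans hE⟩

/-- The set of word equations reachable from a quadratic
word equation under the Nielsen transformation is finite. -/
theorem nielsen_reachable_finite
    [Finite A] [Finite V] [DecidableEq A] [DecidableEq V]
    (E : Equation A V) (hq : Quadratic E) :
    {E' : Equation A V | Relation.ReflTransGen Nielsen E E'}.Finite :=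
  (finite_setOf_eqLen_le (eqLen E)).subset fun _ hE' => by
    simpa only [Set.mem_ofPred_eq, eqLen, List.length_append] using (Nielsen.reflTransGen_subperm hE' hq).length_le

end WordEq
end

section
/- Let E be a quadratic word equation and σ an assignment of words in A* to the variables occurring in E. Then σ is a solution of E if and only if, in the annotated Nielsen transformation, E[σ] ⇒* (ε = ε)[σ'] where σ' is the assignment with empty domain. -/
/-!
An annotated Nielsen step `(L = R)[σ] ⇒ (L' = R')[σ']` strips a common prefix `u` from the two
images: `σ L = u · σ' L'` and `σ R = u · σ' R'`. Hence it preserves and reflects being a solution,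
which gives soundness. Conversely, a solved configuration other than `ε = ε` always admits an
annotated step, the rule being dictated by the heads of `L` and `R` and their images. Either `u`
is nonempty, so `|σ L|` drops, or the step erases letters of the equation, so the pair
`(|σ L|, |L| + |R|)` decreases lexicographically and repeated steps reach `ε = ε`.
-/

namespace WordEq

variable {A V : Type*}

/-- The variable `x` occurs in the equation `E`. -/
def Occurs (x : V) (E : Equation A V) : Prop :=
  Sum.inr x ∈ E.1 ∨ Sum.inr x ∈ E.2

/-- The annotated Nielsen transformation: it acts on pairs `(E, σ)` of an
equation together with an assignment of constant words to its variables.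
The assignment of the target configuration is only constrained on the
variables still occurring in the target equation (modelling the restriction
of the assignment to the variables of the target equation). -/
inductive NielsenAnn [DecidableEq V] :
    Equation A V × (V → List A) → Equation A V × (V → List A) → Prop
  | eraseL (x : V) (w₁ w₂ : Word A V) (σ σ' : V → List A)
      (hx : σ x = [])
      (hagree : ∀ z : V, Occurs z (substVar x [] w₁, substVar x [] w₂) → σ' z = σ z) :
      NielsenAnn ((Sum.inr x :: w₁, w₂), σ)
        ((substVar x [] w₁, substVar x [] w₂), σ')
  | eraseR (w₁ : Word A V) (x : V) (w₂ : Word A V) (σ σ' : V → List A)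
      (hx : σ x = [])
      (hagree : ∀ z : V, Occurs z (substVar x [] w₁, substVar x [] w₂) → σ' z = σ z) :
      NielsenAnn ((w₁, Sum.inr x :: w₂), σ)
        ((substVar x [] w₁, substVar x [] w₂), σ')
  | p1 (α : A ⊕ V) (w₁ w₂ : Word A V) (σ σ' : V → List A)
      (hagree : ∀ z : V, Occurs z (w₁, w₂) → σ' z = σ z) :
      NielsenAnn ((α :: w₁, α :: w₂), σ) ((w₁, w₂), σ')
  | p2 (a : A) (y : V) (w₁ w₂ : Word A V) (σ σ' : V → List A)
      (hy : σ y = a :: σ' y)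
      (hagree : ∀ z : V, z ≠ y →
        Occurs z (substVar y [Sum.inl a, Sum.inr y] w₁,
          Sum.inr y :: substVar y [Sum.inl a, Sum.inr y] w₂) → σ' z = σ z) :
      NielsenAnn ((Sum.inl a :: w₁, Sum.inr y :: w₂), σ)
        ((substVar y [Sum.inl a, Sum.inr y] w₁,
          Sum.inr y :: substVar y [Sum.inl a, Sum.inr y] w₂), σ')
  | p3 (x : V) (a : A) (w₁ w₂ : Word A V) (σ σ' : V → List A)
      (hx : σ x = a :: σ' x)
      (hagree : ∀ z : V, z ≠ x →
        Occurs z (Sum.inr x :: substVar x [Sum.inl a, Sum.inr x] w₁,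
          substVar x [Sum.inl a, Sum.inr x] w₂) → σ' z = σ z) :
      NielsenAnn ((Sum.inr x :: w₁, Sum.inl a :: w₂), σ)
        ((Sum.inr x :: substVar x [Sum.inl a, Sum.inr x] w₁,
          substVar x [Sum.inl a, Sum.inr x] w₂), σ')
  | p4L (x y : V) (hxy : x ≠ y) (w₁ w₂ : Word A V) (σ σ' : V → List A)
      (hne : σ x ≠ [])
      (hy : σ y = σ x ++ σ' y)
      (hagree : ∀ z : V, z ≠ y →
        Occurs z (substVar y [Sum.inr x, Sum.inr y] w₁,
          Sum.inr y :: substVar y [Sum.inr x, Sum.inr y] w₂) → σ' z = σ z) :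
      NielsenAnn ((Sum.inr x :: w₁, Sum.inr y :: w₂), σ)
        ((substVar y [Sum.inr x, Sum.inr y] w₁,
          Sum.inr y :: substVar y [Sum.inr x, Sum.inr y] w₂), σ')
  | p4R (x y : V) (hxy : x ≠ y) (w₁ w₂ : Word A V) (σ σ' : V → List A)
      (hne : σ y ≠ [])
      (hx : σ x = σ y ++ σ' x)
      (hagree : ∀ z : V, z ≠ x →
        Occurs z (Sum.inr x :: substVar x [Sum.inr y, Sum.inr x] w₁,
          substVar x [Sum.inr y, Sum.inr x] w₂) → σ' z = σ z) :
      NielsenAnn ((Sum.inr x :: w₁, Sum.inr y :: w₂), σ)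
        ((Sum.inr x :: substVar x [Sum.inr y, Sum.inr x] w₁,
          substVar x [Sum.inr y, Sum.inr x] w₂), σ')

@[simp] lemma applySub_nil (σ : V → List A) : applySub σ ([] : Word A V) = [] := rfl

@[simp] lemma applySub_cons_inl (σ : V → List A) (a : A) (w : Word A V) :
    applySub σ (Sum.inl a :: w) = a :: applySub σ w := rfl

@[simp] lemma applySub_cons_inr (σ : V → List A) (x : V) (w : Word A V) :
    applySub σ (Sum.inr x :: w) = σ x ++ applySub σ w := rfl

lemma applySub_congr {σ σ' : V → List A} {w : Word A V}
    (h : ∀ z, Sum.inr z ∈ w → σ' z = σ z) : applySub σ' w = applySub σ w :=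
  List.flatMap_congr fun s hs => by
    rcases s with a | z
    · rfl
    · exact h z hs

section
variable [DecidableEq V]

lemma mem_substVar_of_mem {s : A ⊕ V} {x : V} {r w : Word A V} (hs : s ∈ r)
    (hx : Sum.inr x ∈ w) : s ∈ substVar x r w :=
  List.mem_flatMap.2 ⟨_, hx, by simpa using hs⟩

lemma applySub_substVar {σ σ' : V → List A} {x : V} {r w : Word A V}
    (hr : Sum.inr x ∈ w → applySub σ' r = σ x)
    (hagree : ∀ z, z ≠ x → Sum.inr z ∈ substVar x r w → σ' z = σ z) :
    applySub σ' (substVar x r w) = applySub σ w := by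
  simp only [applySub, substVar, List.flatMap_assoc]
  refine List.flatMap_congr fun s hs => ?_
  rcases s with a | z
  · rfl
  · by_cases hz : z = x
    · subst hz
      simp only [if_true]
      exact hr hs
    · have hmem : Sum.inr z ∈ substVar x r w := List.mem_flatMap.2 ⟨_, hs, by simp [hz]⟩
      simpa [hz] using hagree z hz hmem

lemma length_substVar_nil_le (x : V) (w : Word A V) :
    (substVar x ([] : Word A V) w).length ≤ w.length := by
  induction w with
  | nil => rfl
  | cons s w ih =>
    rcases s with a | z
    · simpa [substVar] using ih
    · by_cases hz : z = x <;> simp_all [substVar]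
      omega

lemma eqLen_substVar_nil_le (x : V) (E : Equation A V) :
    eqLen (substVar x [] E.1, substVar x [] E.2) ≤ eqLen E :=
  Nat.add_le_add (length_substVar_nil_le x E.1) (length_substVar_nil_le x E.2)

theorem NielsenAnn.exists_common_prefix {E E' : Equation A V} {σ σ' : V → List A}
    (h : NielsenAnn (E, σ) (E', σ')) :
    ∃ u, applySub σ E.1 = u ++ applySub σ' E'.1 ∧ applySub σ E.2 = u ++ applySub σ' E'.2 ∧
      (u = [] → eqLen E' < eqLen E) := by
  cases h with
  | eraseL x w₁ w₂ σ σ' hx hagree =>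
    have e₁ : applySub σ' (substVar x [] w₁) = applySub σ w₁ :=
      applySub_substVar (fun _ => by simp [hx]) fun z _ hz => hagree z (.inl hz)
    have e₂ : applySub σ' (substVar x [] w₂) = applySub σ w₂ :=
      applySub_substVar (fun _ => by simp [hx]) fun z _ hz => hagree z (.inr hz)
    exact ⟨[], by simp [hx, e₁], by simp [e₂],
      fun _ => (eqLen_substVar_nil_le x (w₁, w₂)).trans_lt (by simp [eqLen])⟩
  | eraseR w₁ x w₂ σ σ' hx hagree =>
    have e₁ : applySub σ' (substVar x [] w₁) = applySub σ w₁ :=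
      applySub_substVar (fun _ => by simp [hx]) fun z _ hz => hagree z (.inl hz)
    have e₂ : applySub σ' (substVar x [] w₂) = applySub σ w₂ :=
      applySub_substVar (fun _ => by simp [hx]) fun z _ hz => hagree z (.inr hz)
    exact ⟨[], by simp [e₁], by simp [hx, e₂],
      fun _ => (eqLen_substVar_nil_le x (w₁, w₂)).trans_lt (by simp [eqLen])⟩
  | p1 α w₁ w₂ σ σ' hagree =>
    have e₁ : applySub σ' w₁ = applySub σ w₁ := applySub_congr fun z hz => hagree z (.inl hz)
    have e₂ : applySub σ' w₂ = applySub σ w₂ := applySub_congr fun z hz => hagree z (.inr hz)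
    refine ⟨applySub σ [α], ?_, ?_, fun _ => by simp [eqLen]; omega⟩ <;>
      rcases α with a | x <;> simp [e₁, e₂]
  | p2 a y w₁ w₂ σ σ' hy hagree =>
    have e₁ : applySub σ' (substVar y [Sum.inl a, Sum.inr y] w₁) = applySub σ w₁ :=
      applySub_substVar (fun _ => by simp [hy]) fun z hz hm => hagree z hz (.inl hm)
    have e₂ : applySub σ' (substVar y [Sum.inl a, Sum.inr y] w₂) = applySub σ w₂ :=
      applySub_substVar (fun _ => by simp [hy])
        fun z hz hm => hagree z hz (.inr (List.mem_cons_of_mem _ hm))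
    exact ⟨[a], by simp [e₁], by simp [e₂, hy], by simp⟩
  | p3 x a w₁ w₂ σ σ' hx hagree =>
    have e₁ : applySub σ' (substVar x [Sum.inl a, Sum.inr x] w₁) = applySub σ w₁ :=
      applySub_substVar (fun _ => by simp [hx])
        fun z hz hm => hagree z hz (.inl (List.mem_cons_of_mem _ hm))
    have e₂ : applySub σ' (substVar x [Sum.inl a, Sum.inr x] w₂) = applySub σ w₂ :=
      applySub_substVar (fun _ => by simp [hx]) fun z hz hm => hagree z hz (.inr hm)
    exact ⟨[a], by simp [e₁, hx], by simp [e₂], by simp⟩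
  | p4L x y hxy w₁ w₂ σ σ' hne hy hagree =>
    have e₁ : applySub σ' (substVar y [Sum.inr x, Sum.inr y] w₁) = applySub σ w₁ :=
      applySub_substVar
        (fun hm => by
          simp [hy, hagree x hxy (.inl (mem_substVar_of_mem (by simp) hm))])
        fun z hz hm => hagree z hz (.inl hm)
    have e₂ : applySub σ' (substVar y [Sum.inr x, Sum.inr y] w₂) = applySub σ w₂ :=
      applySub_substVar
        (fun hm => by
          simp [hy, hagree x hxy
            (.inr (List.mem_cons_of_mem _ (mem_substVar_of_mem (by simp) hm)))])
        fun z hz hm => hagree z hz (.inr (List.mem_cons_of_mem _ hm))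
    exact ⟨σ x, by simp [e₁], by simp [e₂, hy], fun h => absurd h hne⟩
  | p4R x y hxy w₁ w₂ σ σ' hne hx hagree =>
    have e₁ : applySub σ' (substVar x [Sum.inr y, Sum.inr x] w₁) = applySub σ w₁ :=
      applySub_substVar
        (fun hm => by
          simp [hx, hagree y (Ne.symm hxy)
            (.inl (List.mem_cons_of_mem _ (mem_substVar_of_mem (by simp) hm)))])
        fun z hz hm => hagree z hz (.inl (List.mem_cons_of_mem _ hm))
    have e₂ : applySub σ' (substVar x [Sum.inr y, Sum.inr x] w₂) = applySub σ w₂ :=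
      applySub_substVar
        (fun hm => by
          simp [hx, hagree y (Ne.symm hxy) (.inr (mem_substVar_of_mem (by simp) hm))])
        fun z hz hm => hagree z hz (.inr hm)
    exact ⟨σ y, by simp [e₁, hx], by simp [e₂], fun h => absurd h hne⟩

theorem NielsenAnn.isSolution_iff {E E' : Equation A V} {σ σ' : V → List A}
    (h : NielsenAnn (E, σ) (E', σ')) : IsSolution σ E ↔ IsSolution σ' E' := by
  obtain ⟨u, h₁, h₂, -⟩ := h.exists_common_prefix
  rw [IsSolution, IsSolution, h₁, h₂, List.append_cancel_left_eq]

theorem NielsenAnn.prodLex_lt {E E' : Equation A V} {σ σ' : V → List A}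
    (h : NielsenAnn (E, σ) (E', σ')) :
    Prod.Lex (· < ·) (· < ·) ((applySub σ' E'.1).length, eqLen E')
      ((applySub σ E.1).length, eqLen E) := by
  obtain ⟨u, h₁, -, hu⟩ := h.exists_common_prefix
  rw [Prod.lex_def, h₁, List.length_append]
  rcases u with _ | ⟨c, u⟩
  · exact .inr ⟨by simp, hu rfl⟩
  · exact .inl (by simp)

theorem IsSolution.of_reflTransGen_nielsenAnn {p : Equation A V × (V → List A)}
    {σ' : V → List A} (h : Relation.ReflTransGen NielsenAnn p ((([], []) : Equation A V), σ')) :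
    IsSolution p.2 p.1 := by
  induction h using Relation.ReflTransGen.head_induction_on with
  | refl => rfl
  | head step _ ih => exact step.isSolution_iff.2 ih

theorem IsSolution.exists_nielsenAnn :
    ∀ {E : Equation A V} {σ : V → List A}, IsSolution σ E → E ≠ ([], []) →
      ∃ q, NielsenAnn (E, σ) q
  | ([], []), _, _, hE => (hE rfl).elim
  | ([], .inl _ :: _), _, h, _ | (.inl _ :: _, []), _, h, _ => by simp [IsSolution] at h
  | ([], .inr y :: R), σ, h, _ =>
    ⟨_, .eraseR [] y R σ σ (by simp_all [IsSolution]) fun _ _ => rfl⟩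
  | (.inr x :: L, []), σ, h, _ =>
    ⟨_, .eraseL x L [] σ σ (by simp_all [IsSolution]) fun _ _ => rfl⟩
  | (.inl a :: L, .inl b :: R), σ, h, _ => by
    obtain rfl : a = b := by simp_all [IsSolution]
    exact ⟨_, .p1 _ L R σ σ fun _ _ => rfl⟩
  | (.inl a :: L, .inr y :: R), σ, h, _ => by
    rcases hy : σ y with _ | ⟨c, t⟩
    · exact ⟨_, .eraseR _ y R σ σ hy fun _ _ => rfl⟩
    obtain rfl : a = c := by simp_all [IsSolution]
    exact ⟨_, .p2 a y L R σ (Function.update σ y t) (by simp [hy])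
      fun z hz _ => Function.update_of_ne hz _ _⟩
  | (.inr x :: L, .inl b :: R), σ, h, _ => by
    rcases hx : σ x with _ | ⟨c, t⟩
    · exact ⟨_, .eraseL x L _ σ σ hx fun _ _ => rfl⟩
    obtain rfl : b = c := by simp_all [IsSolution]
    exact ⟨_, .p3 x b L R σ (Function.update σ x t) (by simp [hx])
      fun z hz _ => Function.update_of_ne hz _ _⟩
  | (.inr x :: L, .inr y :: R), σ, h, _ => by
    by_cases hxy : x = y
    · subst hxy
      exact ⟨_, .p1 _ L R σ σ fun _ _ => rfl⟩
    by_cases hx : σ x = []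
    · exact ⟨_, .eraseL x L _ σ σ hx fun _ _ => rfl⟩
    by_cases hy : σ y = []
    · exact ⟨_, .eraseR _ y R σ σ hy fun _ _ => rfl⟩
    simp only [IsSolution, applySub_cons_inr] at h
    rcases List.append_eq_append_iff.1 h with ⟨t, ht, -⟩ | ⟨t, ht, -⟩
    · exact ⟨_, .p4L x y hxy L R σ (Function.update σ y t) hx (by simp [ht])
        fun z hz _ => Function.update_of_ne hz _ _⟩
    · exact ⟨_, .p4R x y hxy L R σ (Function.update σ x t) hy (by simp [ht])
        fun z hz _ => Function.update_of_ne hz _ _⟩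

theorem IsSolution.exists_reflTransGen_nielsenAnn {E : Equation A V} {σ : V → List A}
    (h : IsSolution σ E) :
    ∃ σ' : V → List A,
      Relation.ReflTransGen NielsenAnn (E, σ) ((([], []) : Equation A V), σ') := by
  by_cases hE : E = ([], [])
  · exact ⟨σ, hE ▸ .refl⟩
  obtain ⟨⟨E', σ'⟩, step⟩ := h.exists_nielsenAnn hE
  obtain ⟨τ, hτ⟩ := (step.isSolution_iff.1 h).exists_reflTransGen_nielsenAnn
  exact ⟨τ, .head step hτ⟩
termination_by ((applySub σ E.1).length, eqLen E)
decreasing_by exact step.prodLex_lt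

end

theorem isSolution_iff_nielsenAnn_reaches_trivial_general
    [DecidableEq V]
    (E : Equation A V) (σ : V → List A) :
    IsSolution σ E ↔
      ∃ σ' : V → List A,
        Relation.ReflTransGen NielsenAnn (E, σ) ((([], []) : Equation A V), σ') :=
  ⟨IsSolution.exists_reflTransGen_nielsenAnn,
    fun ⟨_, h⟩ => IsSolution.of_reflTransGen_nielsenAnn h⟩

/-- For a quadratic word equation `E`, an assignment `σ` is a
solution of `E` iff, in the annotated Nielsen transformation, `E[σ]` can reach
the trivial annotated configuration `(ε = ε)[σ']` (whose assignment has empty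
domain, i.e. is arbitrary). -/
theorem isSolution_iff_nielsenAnn_reaches_trivial
    [Finite A] [Finite V] [DecidableEq A] [DecidableEq V]
    (E : Equation A V) (hq : Quadratic E) (σ : V → List A) :
    IsSolution σ E ↔
      ∃ σ' : V → List A,
        Relation.ReflTransGen NielsenAnn (E, σ) ((([], []) : Equation A V), σ') :=
  isSolution_iff_nielsenAnn_reaches_trivial_general E σ

end WordEq
end
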